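/- Let 1 ≤ g ≤ ⌊(n−k−2)/2⌋ and let G^k_n be the graph obtained from three disjoint cliques K_{n−k−g}, K_{k−1}, K_{g+1} by adding all edges between K_{k−1} and K_{n−k−g} and all edges between K_{k−1} and K_{g+1}. Then κ^g(G^k_n) = k − 1. -/

import Mathlib

open SimpleGraph

/-- `F` is a g-good-neighbor cut of `G`: removing `F` disconnects `G`
and every vertex outside `F` has at least `g` neighbors outside `F`. -/
def IsGNCut {V : Type*} [Fintype V] (G : SimpleGraph V) (g : ℕ) (F : Finset V) : Prop :=
  ¬ (G.induce ((↑F : Set V)ᶜ)).Preconnected ∧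
    ∀ v : V, v ∉ F → g ≤ (G.neighborSet v \ (↑F : Set V)).ncard

/-- The g-good-neighbor connectivity `κ^g(G)`: minimum size of a g-good-neighbor cut. -/
noncomputable def gnConn {V : Type*} [Fintype V] (G : SimpleGraph V) (g : ℕ) : ℕ :=
  sInf {m | ∃ F : Finset V, IsGNCut G g F ∧ F.card = m}

/-- Classical vertex connectivity (as minimum size of a vertex cut). -/
noncomputable def vConn {V : Type*} [Fintype V] (G : SimpleGraph V) : ℕ :=
  sInf {m | ∃ F : Finset V, ¬ (G.induce ((↑F : Set V)ᶜ)).Preconnected ∧ F.card = m}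

/-- G^k_n: cliques K_{n−k−g}, K_{k−1}, K_{g+1}, joining the middle clique
completely to each of the other two. -/
def Gkn (n k g : ℕ) : SimpleGraph (Fin (n - k - g) ⊕ Fin (k - 1) ⊕ Fin (g + 1)) :=
  SimpleGraph.fromRel (fun x y =>
    match x, y with
    | Sum.inl _, Sum.inl _ => True
    | Sum.inr (Sum.inl _), Sum.inr (Sum.inl _) => True
    | Sum.inr (Sum.inr _), Sum.inr (Sum.inr _) => True
    | Sum.inr (Sum.inl _), Sum.inl _ => True
    | Sum.inl _, Sum.inr (Sum.inl _) => True
    | Sum.inr (Sum.inl _), Sum.inr (Sum.inr _) => True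
    | Sum.inr (Sum.inr _), Sum.inr (Sum.inl _) => True
    | _, _ => False)

/-!
Every vertex of the middle clique `K_{k-1}` is adjacent to all other vertices, so every
disconnecting set contains the whole middle clique. Conversely, deleting it leaves the two
cliques `K_{n-k-g}` and `K_{g+1}` with no edges between them, and there every vertex keeps
at least `g` neighbours since `n - k - g ≥ g + 1`.
-/

namespace SimpleGraph

variable {V : Type*} {G : SimpleGraph V}

theorem preconnected_induce_of_forall_adj {s : Set V} {v : V} (hv : v ∈ s)
    (hadj : ∀ w ∈ s, w ≠ v → G.Adj w v) : (G.induce s).Preconnected := by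
  have reach (z : s) : (G.induce s).Reachable z ⟨v, hv⟩ := by
    by_cases hz : z.val = v
    · obtain rfl : z = ⟨v, hv⟩ := Subtype.ext hz
      rfl
    · exact Adj.reachable (hadj z z.2 hz)
  exact fun x y => (reach x).trans (reach y).symm

theorem not_preconnected_induce_of_forall_not_adj {s A : Set V} {u v : V}
    (hu : u ∈ s ∩ A) (hv : v ∈ s \ A) (hnadj : ∀ a ∈ s ∩ A, ∀ b ∈ s \ A, ¬ G.Adj a b) :
    ¬ (G.induce s).Preconnected := by
  intro hpc
  obtain ⟨p⟩ := hpc ⟨u, hu.1⟩ ⟨v, hv.1⟩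
  obtain ⟨d, -, hd₁, hd₂⟩ := p.exists_boundary_dart (Subtype.val ⁻¹' A) hu.2 hv.2
  exact hnadj _ ⟨d.fst.2, hd₁⟩ _ ⟨d.snd.2, hd₂⟩ d.adj

theorem subset_of_not_preconnected_induce_compl {U F : Finset V}
    (hU : ∀ u ∈ U, ∀ w ≠ u, G.Adj w u) (hF : ¬ (G.induce (↑F : Set V)ᶜ).Preconnected) :
    U ⊆ F := by
  intro u hu
  by_contra huF
  exact hF (preconnected_induce_of_forall_adj huF fun w _ hw => hU u hu w hw)

theorem sub_one_le_ncard_neighborSet_sdiff {C F : Set V} {v : V} (hC : G.IsClique C)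
    (hv : v ∈ C) (hCF : Disjoint C F) [Finite V] :
    C.ncard - 1 ≤ (G.neighborSet v \ F).ncard := by
  rw [← Set.ncard_sdiff_singleton_of_mem hv]
  refine Set.ncard_le_ncard fun w ⟨hwC, hwv⟩ => ⟨hC hv hwC (Ne.symm hwv), ?_⟩
  exact Set.disjoint_left.mp hCF hwC

end SimpleGraph

theorem gnConn_eq_card {V : Type*} [Fintype V] {G : SimpleGraph V} {g : ℕ} {F : Finset V}
    (hF : IsGNCut G g F)
    (hmin : ∀ F' : Finset V, ¬ (G.induce (↑F' : Set V)ᶜ).Preconnected → F.card ≤ F'.card) :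
    gnConn G g = F.card :=
  le_antisymm (Nat.sInf_le ⟨F, hF, rfl⟩) <|
    le_csInf ⟨_, F, hF, rfl⟩ fun _ ⟨F', hF', hcard⟩ => hcard ▸ hmin F' hF'.1

namespace Gkn

variable {n k g : ℕ}

def middle (n k g : ℕ) : Finset (Fin (n - k - g) ⊕ Fin (k - 1) ⊕ Fin (g + 1)) :=
  Finset.univ.map (Function.Embedding.inl.trans Function.Embedding.inr)

theorem card_middle : (middle n k g).card = k - 1 := by
  simp [middle]

theorem mem_middle {v : Fin (n - k - g) ⊕ Fin (k - 1) ⊕ Fin (g + 1)} :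
    v ∈ middle n k g ↔ ∃ y, v = Sum.inr (Sum.inl y) := by
  simp [middle, eq_comm]

theorem adj_of_mem_middle (u : Fin (n - k - g) ⊕ Fin (k - 1) ⊕ Fin (g + 1))
    (hu : u ∈ middle n k g) (w) (hw : w ≠ u) : (Gkn n k g).Adj w u := by
  obtain ⟨y, rfl⟩ := mem_middle.mp hu
  refine ⟨hw, Or.inr ?_⟩
  rcases w with _ | _ | _ <;> trivial

theorem isClique_left : (Gkn n k g).IsClique (Set.range Sum.inl) := by
  rintro _ ⟨x, rfl⟩ _ ⟨y, rfl⟩ hxy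
  exact ⟨hxy, Or.inl trivial⟩

theorem isClique_right :
    (Gkn n k g).IsClique (Set.range (Sum.inr ∘ Sum.inr)) := by
  rintro _ ⟨x, rfl⟩ _ ⟨y, rfl⟩ hxy
  exact ⟨hxy, Or.inl trivial⟩

theorem not_preconnected_induce_compl_middle (hleft : 0 < n - k - g) :
    ¬ ((Gkn n k g).induce (↑(middle n k g))ᶜ).Preconnected := by
  refine not_preconnected_induce_of_forall_not_adj (A := Set.range Sum.inl)
    (u := Sum.inl ⟨0, hleft⟩) (v := Sum.inr (Sum.inr 0)) ?_ ?_ ?_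
  · simp [mem_middle]
  · simp [mem_middle]
  · rintro _ ⟨-, x, rfl⟩ (b | b | b) ⟨hb, hbA⟩ hadj
    · exact hbA ⟨b, rfl⟩
    · exact hb (mem_middle.mpr ⟨b, rfl⟩)
    · simp [Gkn] at hadj

theorem isGNCut_middle (hsize : g + 1 ≤ n - k - g) :
    IsGNCut (Gkn n k g) g (middle n k g) := by
  set M : Set (Fin (n - k - g) ⊕ Fin (k - 1) ⊕ Fin (g + 1)) := ↑(middle n k g)
  have hleft : Disjoint (Set.range Sum.inl) M :=
    Set.disjoint_left.mpr <| by simp [M, mem_middle]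
  have hright : Disjoint (Set.range (Sum.inr ∘ Sum.inr)) M :=
    Set.disjoint_left.mpr <| by simp [M, mem_middle]
  refine ⟨not_preconnected_induce_compl_middle (by omega), ?_⟩
  rintro (x | y | z) hv
  · calc g ≤ (Set.range (Sum.inl : _ → Fin (n - k - g) ⊕ _)).ncard - 1 := by
          rw [Set.ncard_range_of_injective Sum.inl_injective, Nat.card_fin]
          omega
      _ ≤ _ := sub_one_le_ncard_neighborSet_sdiff isClique_left ⟨x, rfl⟩ hleft
  · exact absurd (mem_middle.mpr ⟨y, rfl⟩) hv
  · calc g = (Set.range (Sum.inr ∘ Sum.inr : Fin (g + 1) → _)).ncard - 1 := by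
          rw [Set.ncard_range_of_injective (Sum.inr_injective.comp Sum.inr_injective),
            Nat.card_fin, Nat.add_sub_cancel]
      _ ≤ _ := sub_one_le_ncard_neighborSet_sdiff isClique_right ⟨z, rfl⟩ hright

end Gkn

theorem stmt15_general (n k g : ℕ) (hbound : k + 2 * g + 2 ≤ n) :
    gnConn (Gkn n k g) g = k - 1 := by
  refine (gnConn_eq_card (Gkn.isGNCut_middle (by omega)) fun F hF => ?_).trans Gkn.card_middle
  exact Finset.card_le_card
    (SimpleGraph.subset_of_not_preconnected_induce_compl Gkn.adj_of_mem_middle hF)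

/-- For 1 ≤ g ≤ ⌊(n−k−2)/2⌋ (i.e. k + 2g + 2 ≤ n) and k ≥ 1: κ^g(G^k_n) = k − 1. -/
theorem stmt15 (n k g : ℕ) (hg : 1 ≤ g) (hk : 1 ≤ k) (hbound : k + 2 * g + 2 ≤ n) :
    gnConn (Gkn n k g) g = k - 1 :=
  stmt15_general n k g hbound
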